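/- arXiv:1908.01935 — 6 statements merged into one kernel-verified Lean document; each statement's English description precedes it below -/
import Mathlib

section
/- Let X be a nonzero complex Hilbert space and let A be a bounded normal operator on X (i.e., A commutes with its adjoint A*). Then A is not hypercyclic: there is no vector f in X whose orbit {Aⁿf : n ∈ ℕ} is dense in X. -/
/-!
For a normal operator `A` one has `‖A x‖² = ⟪A† A x, x⟫ ≤ ‖A† A x‖ ‖x‖ = ‖A² x‖ ‖x‖`, so the
norms `aₙ = ‖Aⁿ f‖` of an orbit form a log-convex sequence. Such a sequence is either
nonincreasing, hence bounded, or strictly increasing from some index on, hence bounded away from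
zero (earlier terms cannot vanish, since a zero term forces all later ones to vanish). A dense
orbit, however, must come arbitrarily close to `0` and leave every ball.
-/

open ContinuousLinearMap

section LogConvexSequence

variable {a : ℕ → ℝ}

theorem eq_zero_of_le_of_sq_le_mul (h : ∀ n, a (n + 1) ^ 2 ≤ a (n + 2) * a n) {m n : ℕ}
    (hm : a m = 0) (hmn : m ≤ n) : a n = 0 := by
  induction n, hmn using Nat.le_induction with
  | base => exact hm
  | succ n _ ih =>
    have hsq : a (n + 1) ^ 2 ≤ 0 := by simpa [ih] using h n
    exact pow_eq_zero_iff two_ne_zero |>.mp (le_antisymm hsq (sq_nonneg _))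

theorem lt_succ_of_le_of_sq_le_mul (h0 : ∀ n, 0 ≤ a n)
    (h : ∀ n, a (n + 1) ^ 2 ≤ a (n + 2) * a n) {N : ℕ} (hN : a N < a (N + 1)) {n : ℕ}
    (hn : N ≤ n) : a n < a (n + 1) := by
  induction n, hn using Nat.le_induction with
  | base => exact hN
  | succ n _ ih => nlinarith [h n, h0 n]

theorem exists_le_or_exists_pos_le_of_sq_le_mul (h0 : ∀ n, 0 ≤ a n)
    (h : ∀ n, a (n + 1) ^ 2 ≤ a (n + 2) * a n) :
    (∃ C, ∀ n, a n ≤ C) ∨ ∃ c > 0, ∀ n, c ≤ a n := by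
  by_cases hanti : ∀ n, a (n + 1) ≤ a n
  · exact .inl ⟨a 0, fun n => antitone_nat_of_succ_le hanti n.zero_le⟩
  simp only [not_forall, not_le] at hanti
  obtain ⟨N, hN⟩ := hanti
  have hmono : MonotoneOn a (Set.Ici N) :=
    monotoneOn_nat_Ici_of_le_succ fun n hn => (lt_succ_of_le_of_sq_le_mul h0 h hN hn).le
  obtain ⟨k, hk, hmin⟩ :=
    (Finset.range (N + 1)).exists_min_image a Finset.nonempty_range_add_one
  have hk_pos : 0 < a k := by
    refine (h0 k).lt_of_ne fun hk0 => ?_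
    have hk_le : k ≤ N + 1 := by simp only [Finset.mem_range] at hk; omega
    have hN_zero : a (N + 1) = 0 := eq_zero_of_le_of_sq_le_mul h hk0.symm hk_le
    linarith [h0 N]
  refine .inr ⟨a k, hk_pos, fun n => ?_⟩
  rcases le_or_gt n N with hn | hn
  · exact hmin n (Finset.mem_range.2 (Nat.lt_succ_of_le hn))
  · calc a k ≤ a N := hmin N (Finset.self_mem_range_succ N)
      _ ≤ a n := hmono Set.self_mem_Ici hn.le hn.le

end LogConvexSequence

theorem DenseRange.exists_norm_lt {ι E : Type*} [SeminormedAddCommGroup E] {f : ι → E}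
    (hf : DenseRange f) {ε : ℝ} (hε : 0 < ε) : ∃ i, ‖f i‖ < ε := by
  obtain ⟨i, hi⟩ := Metric.denseRange_iff.1 hf 0 ε hε
  exact ⟨i, by rwa [dist_zero_left] at hi⟩

theorem DenseRange.exists_lt_norm (𝕜 : Type*) {ι E : Type*} [NontriviallyNormedField 𝕜]
    [NormedAddCommGroup E] [NormedSpace 𝕜 E] [Nontrivial E] {f : ι → E} (hf : DenseRange f)
    (C : ℝ) : ∃ i, C < ‖f i‖ := by
  obtain ⟨x, hx⟩ := NormedSpace.exists_lt_norm 𝕜 E (C + 1)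
  obtain ⟨i, hi⟩ := Metric.denseRange_iff.1 hf x 1 one_pos
  refine ⟨i, ?_⟩
  rw [dist_eq_norm] at hi
  linarith [norm_sub_norm_le x (f i)]

namespace IsStarNormal

variable {𝕜 E : Type*} [RCLike 𝕜] [NormedAddCommGroup E] [InnerProductSpace 𝕜 E]
  [CompleteSpace E] {T : E →L[𝕜] E}

theorem norm_apply_sq_le (hT : IsStarNormal T) (x : E) : ‖T x‖ ^ 2 ≤ ‖T (T x)‖ * ‖x‖ :=
  calc ‖T x‖ ^ 2 = RCLike.re (inner 𝕜 (adjoint T (T x)) x) := by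
        rw [adjoint_inner_left, inner_self_eq_norm_sq]
    _ ≤ ‖adjoint T (T x)‖ * ‖x‖ := (RCLike.re_le_norm _).trans (norm_inner_le_norm _ _)
    _ = ‖T (T x)‖ * ‖x‖ := by rw [← isStarNormal_iff_norm_eq_adjoint.mp hT]

theorem norm_pow_apply_sq_le (hT : IsStarNormal T) (x : E) (n : ℕ) :
    ‖(T ^ (n + 1)) x‖ ^ 2 ≤ ‖(T ^ (n + 2)) x‖ * ‖(T ^ n) x‖ := by
  rw [pow_succ' T (n + 1), pow_succ' T n]
  exact hT.norm_apply_sq_le ((T ^ n) x)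

end IsStarNormal

/-- A bounded normal operator on a nonzero complex Hilbert space is not hypercyclic. -/
theorem normal_not_hypercyclic {X : Type*} [NormedAddCommGroup X] [InnerProductSpace ℂ X]
    [CompleteSpace X] [Nontrivial X] (A : X →L[ℂ] X)
    (hnormal : A * ContinuousLinearMap.adjoint A = ContinuousLinearMap.adjoint A * A) :
    ¬ ∃ f : X, DenseRange (fun n : ℕ => (A ^ n) f) := by
  rintro ⟨f, hf⟩
  have hA : IsStarNormal A := ⟨by rw [star_eq_adjoint]; exact hnormal.symm⟩
  rcases exists_le_or_exists_pos_le_of_sq_le_mul (a := fun n => ‖(A ^ n) f‖)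
    (fun n => norm_nonneg _) (hA.norm_pow_apply_sq_le f) with ⟨C, hC⟩ | ⟨c, hc, hcle⟩
  · obtain ⟨n, hn⟩ := hf.exists_lt_norm ℂ C
    exact (hC n).not_gt hn
  · obtain ⟨n, hn⟩ := hf.exists_norm_lt hc
    exact (hcle n).not_gt hn
end

section
/- Let A be a bounded normal operator on a complex Hilbert space X. Then for every vector f ∈ X, either there exists a constant c > 0 such that ‖Aⁿf‖ ≥ c for all n ∈ ℕ, or ‖Aⁿf‖ ≤ ‖f‖ for all n ∈ ℕ. (In particular, every orbit under A is either bounded away from zero or norm-bounded by ‖f‖, hence never dense when X ≠ {0}.) -/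
/-!
For any bounded operator `‖A x‖² = ⟪A† A x, x⟫ ≤ ‖A† A x‖ ‖x‖`, and normality turns `‖A† A x‖`
into `‖A² x‖`. Hence `a n = ‖Aⁿ f‖` satisfies `a (n+1)² ≤ a (n+2) a n`: the sequence is
log-convex, so once it increases it keeps increasing (and it cannot increase after vanishing).
Either it never increases, and `a n ≤ a 0 = ‖f‖`, or it increases from some index `N` on, is
positive up to `N`, and its minimum over `[0, N]` is a positive lower bound.
-/

open ContinuousLinearMap

section LogConvex

variable {a : ℕ → ℝ}

lemma eq_zero_of_le_of_log_convex (hlog : ∀ n, a (n + 1) ^ 2 ≤ a (n + 2) * a n) {n m : ℕ}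
    (hn : a n = 0) (hnm : n ≤ m) : a m = 0 := by
  induction m, hnm using Nat.le_induction with
  | base => exact hn
  | succ m _ ih =>
    have := hlog m
    rw [ih, mul_zero] at this
    exact pow_eq_zero_iff two_ne_zero |>.mp (le_antisymm this (sq_nonneg _))

lemma lt_succ_of_lt_of_log_convex (ha : ∀ n, 0 ≤ a n)
    (hlog : ∀ n, a (n + 1) ^ 2 ≤ a (n + 2) * a n) {n : ℕ}
    (h : a n < a (n + 1)) : a (n + 1) < a (n + 2) := by
  by_contra! hle
  have hpos : 0 < a (n + 1) := (ha n).trans_lt h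
  have := hlog n
  nlinarith [ha n, ha (n + 2)]

lemma le_of_lt_succ_of_log_convex (ha : ∀ n, 0 ≤ a n)
    (hlog : ∀ n, a (n + 1) ^ 2 ≤ a (n + 2) * a n) {N m : ℕ}
    (hN : a N < a (N + 1)) (hNm : N ≤ m) : a N ≤ a m := by
  have hinc : ∀ k, N ≤ k → a k < a (k + 1) := fun k hk => by
    induction k, hk using Nat.le_induction with
    | base => exact hN
    | succ k _ ih => exact lt_succ_of_lt_of_log_convex ha hlog ih
  induction m, hNm using Nat.le_induction with
  | base => exact le_rfl
  | succ m hm ih => exact ih.trans (hinc m hm).le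

lemma exists_pos_le_or_antitone_of_log_convex (ha : ∀ n, 0 ≤ a n)
    (hlog : ∀ n, a (n + 1) ^ 2 ≤ a (n + 2) * a n) :
    (∃ c : ℝ, 0 < c ∧ ∀ n, c ≤ a n) ∨ Antitone a := by
  by_cases hanti : ∀ n, a (n + 1) ≤ a n
  · exact .inr (antitone_nat_of_succ_le hanti)
  push Not at hanti
  obtain ⟨N, hN⟩ := hanti
  have hpos : ∀ n ≤ N, 0 < a n := fun n hn => by
    refine (ha n).lt_of_ne fun h => ?_
    have := eq_zero_of_le_of_log_convex hlog h.symm (hn.trans N.le_succ)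
    linarith [ha N]
  set c := (Finset.range (N + 1)).inf' Finset.nonempty_range_add_one a
  have hc_le : ∀ n ≤ N, c ≤ a n := fun n hn =>
    Finset.inf'_le _ (Finset.mem_range_succ_iff.mpr hn)
  refine .inl ⟨c, (Finset.lt_inf'_iff _).mpr fun n hn => hpos n ?_, fun n => ?_⟩
  · exact Finset.mem_range_succ_iff.mp hn
  · rcases le_total n N with hn | hn
    · exact hc_le n hn
    · exact (hc_le N le_rfl).trans (le_of_lt_succ_of_log_convex ha hlog hN hn)

end LogConvex

namespace ContinuousLinearMap

variable {𝕜 E F : Type*} [RCLike 𝕜] [NormedAddCommGroup E] [InnerProductSpace 𝕜 E]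
  [NormedAddCommGroup F] [InnerProductSpace 𝕜 F] [CompleteSpace E] [CompleteSpace F]

lemma norm_apply_sq_le_norm_adjoint_apply_mul_norm (A : E →L[𝕜] F) (x : E) :
    ‖A x‖ ^ 2 ≤ ‖adjoint A (A x)‖ * ‖x‖ :=
  calc ‖A x‖ ^ 2 = RCLike.re (inner 𝕜 (adjoint A (A x)) x) :=
        apply_norm_sq_eq_inner_adjoint_left A x
    _ ≤ ‖inner 𝕜 (adjoint A (A x)) x‖ := RCLike.re_le_norm _
    _ ≤ ‖adjoint A (A x)‖ * ‖x‖ := norm_inner_le_norm _ _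

lemma IsStarNormal.norm_apply_sq_le {T : E →L[𝕜] E} (hT : IsStarNormal T) (x : E) :
    ‖T x‖ ^ 2 ≤ ‖T (T x)‖ * ‖x‖ := by
  rw [isStarNormal_iff_norm_eq_adjoint.mp hT (T x)]
  exact norm_apply_sq_le_norm_adjoint_apply_mul_norm T x

end ContinuousLinearMap

/-- For a bounded normal operator `A` on a complex Hilbert space, every orbit is either
bounded away from zero or norm-bounded by `‖f‖`. -/
theorem normal_orbit_dichotomy {X : Type*} [NormedAddCommGroup X] [InnerProductSpace ℂ X]
    [CompleteSpace X] (A : X →L[ℂ] X)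
    (hnormal : A * ContinuousLinearMap.adjoint A = ContinuousLinearMap.adjoint A * A)
    (f : X) :
    (∃ c : ℝ, 0 < c ∧ ∀ n : ℕ, c ≤ ‖(A ^ n) f‖) ∨ (∀ n : ℕ, ‖(A ^ n) f‖ ≤ ‖f‖) := by
  have hA : IsStarNormal A := ⟨by rw [star_eq_adjoint]; exact hnormal.symm⟩
  have hlog (n : ℕ) : ‖(A ^ (n + 1)) f‖ ^ 2 ≤ ‖(A ^ (n + 2)) f‖ * ‖(A ^ n) f‖ := by
    simpa only [pow_succ' A, mul_apply_eq_comp] using hA.norm_apply_sq_le ((A ^ n) f)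
  refine (exists_pos_le_or_antitone_of_log_convex (fun n => norm_nonneg _) hlog).imp id
    fun hanti n => ?_
  simpa using hanti (Nat.zero_le n)
end

section
/- Let A be a bounded normal operator on a complex Hilbert space X. Then for every vector f ∈ X, either there exists a constant c > 0 such that ‖e^{tA}f‖ ≥ c for all t ≥ 0, or ‖e^{tA}f‖ ≤ ‖f‖ for all t ≥ 0. (In particular, every exponential orbit {e^{tA}f : t ≥ 0} is either bounded away from zero or norm-bounded by ‖f‖, hence never dense when X ≠ {0}.) -/
/-!
For normal `A`, `‖e^{tA} f‖² = re ⟪f, e^{tB} f⟫` with the self-adjoint `B = A* + A`, and this is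
convex in `t`: its second derivative is `re ⟪f, e^{tB} B² f⟫ = ‖B e^{tB/2} f‖² ≥ 0`. For `f ≠ 0` it
is also positive, `e^{tA}` being invertible. A positive convex function on `[0, ∞)` either never
exceeds its value at `0`, or exceeds it at some `t₀`; it then keeps growing beyond `t₀`, so it is
bounded below by its (positive) minimum on `[0, t₀]`.
-/

open NormedSpace Set

section StarAlgebra

variable {𝔸 : Type*} [NormedRing 𝔸] [NormedAlgebra ℝ 𝔸] [CompleteSpace 𝔸] [StarRing 𝔸]
  [ContinuousStar 𝔸] [StarModule ℝ 𝔸]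

theorem IsStarNormal.star_exp_smul_mul_exp_smul {a : 𝔸} (ha : IsStarNormal a) (t : ℝ) :
    star (NormedSpace.exp (t • a)) * NormedSpace.exp (t • a) =
      NormedSpace.exp (t • (star a + a)) := by
  -- the algebraic laws of `NormedSpace.exp` are stated for `ℚ`-algebras
  let _ : NormedAlgebra ℚ 𝔸 := .restrictScalars ℚ ℝ 𝔸
  rw [star_exp, star_smul, star_trivial, smul_add,
    exp_add_of_commute ((ha.star_comm_self.smul_left t).smul_right t)]

theorem IsSelfAdjoint.exp_smul_mul_mul_self_eq_star_mul_self {b : 𝔸} (hb : IsSelfAdjoint b)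
    (t : ℝ) :
    NormedSpace.exp (t • b) * (b * b) =
      star (b * NormedSpace.exp ((t / 2) • b)) * (b * NormedSpace.exp ((t / 2) • b)) := by
  let _ : NormedAlgebra ℚ 𝔸 := .restrictScalars ℚ ℝ 𝔸
  have hcomm : Commute b (NormedSpace.exp ((t / 2) • b)) :=
    ((Commute.refl b).smul_right _).exp_right
  have hhalf :
      NormedSpace.exp (t • b) = NormedSpace.exp ((t / 2) • b) * NormedSpace.exp ((t / 2) • b) := by
    rw [← exp_add_of_commute (((Commute.refl b).smul_left _).smul_right _), ← add_smul,
      add_halves]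
  rw [star_mul, star_exp, star_smul, star_trivial, hb.star_eq, hhalf, mul_assoc, mul_assoc,
    ← mul_assoc b b, (hcomm.mul_left hcomm).eq]

end StarAlgebra

section HilbertSpace

open ContinuousLinearMap RCLike

variable {X : Type*} [NormedAddCommGroup X] [InnerProductSpace ℂ X] [CompleteSpace X]

theorem hasDerivAt_re_inner_exp_smul_apply (B : X →L[ℂ] X) (x y : X) (t : ℝ) :
    HasDerivAt (fun s : ℝ => re (inner ℂ x (NormedSpace.exp (s • B) y)))
      (re (inner ℂ x (NormedSpace.exp (t • B) (B y)))) t := by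
  have h := ((reCLM.comp ((innerSL ℂ x).restrictScalars ℝ)).comp
    ((apply ℂ X y).restrictScalars ℝ)).hasFDerivAt.comp_hasDerivAt t
    (hasDerivAt_exp_smul_const (𝕂 := ℝ) B t)
  simpa [Function.comp_def] using h

theorem IsSelfAdjoint.re_inner_exp_smul_apply_apply_nonneg {B : X →L[ℂ] X}
    (hB : IsSelfAdjoint B) (x : X) (t : ℝ) :
    0 ≤ re (inner ℂ x (NormedSpace.exp (t • B) (B (B x)))) := by
  have h := congrArg (fun T : X →L[ℂ] X => T x) (hB.exp_smul_mul_mul_self_eq_star_mul_self t)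
  simp only [mul_apply_eq_comp] at h
  rw [h, star_eq_adjoint, adjoint_inner_right]
  exact inner_self_nonneg

theorem IsSelfAdjoint.convexOn_re_inner_exp_smul {B : X →L[ℂ] X} (hB : IsSelfAdjoint B)
    (x : X) :
    ConvexOn ℝ univ (fun t : ℝ => re (inner ℂ x (NormedSpace.exp (t • B) x))) := by
  have hderiv := hasDerivAt_re_inner_exp_smul_apply B x
  refine Monotone.convexOn_univ_of_deriv (fun t => (hderiv x t).differentiableAt) ?_
  rw [funext fun t => (hderiv x t).deriv]
  exact monotone_of_deriv_nonneg (fun t => (hderiv (B x) t).differentiableAt)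
    fun t => (hderiv (B x) t).deriv ▸ hB.re_inner_exp_smul_apply_apply_nonneg x t

theorem IsStarNormal.norm_exp_smul_apply_sq {A : X →L[ℂ] X} (hA : IsStarNormal A) (x : X)
    (t : ℝ) :
    ‖NormedSpace.exp (t • A) x‖ ^ 2 = re (inner ℂ x (NormedSpace.exp (t • (star A + A)) x)) := by
  rw [← hA.star_exp_smul_mul_exp_smul, mul_apply_eq_comp, star_eq_adjoint, adjoint_inner_right,
    inner_self_eq_norm_sq]

theorem IsStarNormal.convexOn_norm_exp_smul_apply_sq {A : X →L[ℂ] X} (hA : IsStarNormal A)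
    (x : X) : ConvexOn ℝ univ (fun t : ℝ => ‖NormedSpace.exp (t • A) x‖ ^ 2) := by
  simp only [hA.norm_exp_smul_apply_sq]
  exact (IsSelfAdjoint.star_add_self A).convexOn_re_inner_exp_smul x

end HilbertSpace

theorem ContinuousLinearMap.exp_apply_ne_zero {𝕜 E : Type*} [RCLike 𝕜] [NormedAddCommGroup E]
    [NormedSpace 𝕜 E] [CompleteSpace E] (T : E →L[𝕜] E) {x : E} (hx : x ≠ 0) :
    NormedSpace.exp T x ≠ 0 :=
  let _ : NormedAlgebra ℚ (E →L[𝕜] E) := .restrictScalars ℚ 𝕜 _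
  (isUnit_iff_bijective.mp (isUnit_exp T)).injective.ne_iff' (map_zero _) |>.mpr hx

theorem ConvexOn.exists_pos_le_or_le_apply_zero {g : ℝ → ℝ} (hconv : ConvexOn ℝ (Ici 0) g)
    (hcont : ContinuousOn g (Ici 0)) (hpos : ∀ t, 0 ≤ t → 0 < g t) :
    (∃ c, 0 < c ∧ ∀ t, 0 ≤ t → c ≤ g t) ∨ ∀ t, 0 ≤ t → g t ≤ g 0 := by
  by_cases hle : ∀ t, 0 ≤ t → g t ≤ g 0
  · exact Or.inr hle
  push Not at hle
  obtain ⟨t₀, ht₀, hgt₀⟩ := hle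
  obtain ⟨t₁, ht₁, hmin⟩ := isCompact_Icc.exists_isMinOn (nonempty_Icc.mpr ht₀)
    (hcont.mono Icc_subset_Ici_self)
  refine Or.inl ⟨g t₁, hpos t₁ ht₁.1, fun t ht => ?_⟩
  rcases le_total t t₀ with htt₀ | ht₀t
  · exact hmin ⟨ht, htt₀⟩
  have ht₀pos : 0 < t₀ := ht₀.lt_of_ne (by rintro rfl; exact hgt₀.false)
  calc g t₁ ≤ g t₀ := hmin ⟨ht₀, le_rfl⟩
    _ ≤ g t := hconv.le_right_of_left_le'' self_mem_Ici (ht₀.trans ht₀t) ht₀pos ht₀t hgt₀.le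

/-- For a bounded normal operator `A` on a complex Hilbert space, every exponential orbit
`{e^{tA} f : t ≥ 0}` is either bounded away from zero or norm-bounded by `‖f‖`. -/
theorem normal_exp_orbit_dichotomy {X : Type*} [NormedAddCommGroup X] [InnerProductSpace ℂ X]
    [CompleteSpace X] (A : X →L[ℂ] X)
    (hnormal : A * ContinuousLinearMap.adjoint A = ContinuousLinearMap.adjoint A * A)
    (f : X) :
    (∃ c : ℝ, 0 < c ∧ ∀ t : ℝ, 0 ≤ t → c ≤ ‖NormedSpace.exp (t • A) f‖) ∨
      (∀ t : ℝ, 0 ≤ t → ‖NormedSpace.exp (t • A) f‖ ≤ ‖f‖) := by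
  rcases eq_or_ne f 0 with rfl | hf
  · exact Or.inr fun t _ => by simp
  have hA : IsStarNormal A := ⟨hnormal.symm⟩
  have hconv := (hA.convexOn_norm_exp_smul_apply_sq f).subset (subset_univ _) (convex_Ici 0)
  have hcont : Continuous fun t : ℝ => ‖NormedSpace.exp (t • A) f‖ ^ 2 :=
    (((differentiable_exp_smul_const ℝ A).continuous.clm_apply continuous_const).norm).pow 2
  have hpos (t : ℝ) (_ : 0 ≤ t) : 0 < ‖NormedSpace.exp (t • A) f‖ ^ 2 := by
    have := (t • A).exp_apply_ne_zero hf
    positivity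
  rcases hconv.exists_pos_le_or_le_apply_zero hcont.continuousOn hpos with ⟨c, hc, hle⟩ | hle
  · exact Or.inl ⟨√c, Real.sqrt_pos.mpr hc, fun t ht =>
      (Real.sqrt_le_left (norm_nonneg _)).mpr (hle t ht)⟩
  · refine Or.inr fun t ht => (sq_le_sq₀ (norm_nonneg _) (norm_nonneg _)).mp ?_
    simpa using hle t ht
end

section
/- Let 𝕜 be ℝ or ℂ, let X be a nonzero Hilbert space over 𝕜, and let A be a bounded linear operator on X that is hypercyclic. Then the adjoint operator A* has no eigenvalues: for every λ ∈ 𝕜 and every g ∈ X, if A*g = λg then g = 0. -/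
/-!
If `A† g = l • g` with `g ≠ 0`, the functional `⟪g, ·⟫` is nonzero, hence surjective onto `𝕜`, and
intertwines `A` with multiplication by `conj l`. It therefore maps every orbit `Aⁿ f` onto a
geometric sequence `(conj l)ⁿ ⟪g, f⟫`, which is never dense in `𝕜`: it stays in a bounded ball
if `|l| ≤ 1` or `⟪g, f⟫ = 0`, and away from `0` otherwise. Since a continuous surjection maps
dense sets to dense sets, no orbit of `A` is dense.
-/

section

variable {K : Type*} [NontriviallyNormedField K]

theorem not_denseRange_geometric (μ c : K) : ¬DenseRange fun n : ℕ => μ ^ n * c := by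
  intro hd
  have not_subset_of_isClosed {s : Set K} (hs : IsClosed s) (x : K) (hx : x ∉ s) :
      ¬Set.range (fun n : ℕ => μ ^ n * c) ⊆ s := fun hsub =>
    hx (hs.closure_subset_iff.mpr hsub (hd x))
  by_cases hbounded : ‖μ‖ ≤ 1 ∨ c = 0
  · obtain ⟨x, hx⟩ := NormedField.exists_lt_norm K ‖c‖
    refine not_subset_of_isClosed (Metric.isClosed_closedBall (x := 0) (ε := ‖c‖)) x
      (by simpa using hx) ?_
    rintro _ ⟨n, rfl⟩
    rcases hbounded with hμ | rfl
    · simpa [norm_mul, norm_pow] using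
        mul_le_of_le_one_left (norm_nonneg c) (pow_le_one₀ (norm_nonneg μ) hμ)
    · simp
  · push Not at hbounded
    obtain ⟨hμ, hc⟩ := hbounded
    refine not_subset_of_isClosed (s := {x | ‖c‖ ≤ ‖x‖})
      (isClosed_le continuous_const continuous_norm) 0 (by simpa using hc) ?_
    rintro _ ⟨n, rfl⟩
    simpa [norm_mul, norm_pow] using le_mul_of_one_le_left (norm_nonneg c) (one_le_pow₀ hμ.le)

variable {X : Type*} [AddCommMonoid X] [TopologicalSpace X] [Module K X]

theorem ContinuousLinearMap.apply_pow_apply_of_comp_eq_smul {A : X →L[K] X} {φ : X →L[K] K}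
    {μ : K} (h : φ.comp A = μ • φ) (n : ℕ) (x : X) : φ ((A ^ n) x) = μ ^ n * φ x := by
  induction n with
  | zero => simp
  | succ n ih =>
    rw [pow_succ', mul_apply_eq_comp, ← ContinuousLinearMap.comp_apply, h,
      smul_apply, ih, smul_eq_mul, pow_succ', mul_assoc]

theorem ContinuousLinearMap.not_denseRange_orbit_of_comp_eq_smul {A : X →L[K] X}
    {φ : X →L[K] K} (hφ : φ ≠ 0) {μ : K} (h : φ.comp A = μ • φ) (f : X) :
    ¬DenseRange fun n : ℕ => (A ^ n) f := by
  intro hf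
  have hφ_surj : Function.Surjective φ :=
    LinearMap.surjective fun h0 => hφ (ContinuousLinearMap.coe_injective h0)
  have hdense := hφ_surj.denseRange.comp hf φ.continuous
  simp only [Function.comp_def, apply_pow_apply_of_comp_eq_smul h] at hdense
  exact not_denseRange_geometric μ (φ f) hdense

end

theorem adjoint_no_eigenvalues_of_hypercyclic_general {𝕜 : Type*} [RCLike 𝕜] {X : Type*}
    [NormedAddCommGroup X] [InnerProductSpace 𝕜 X] [CompleteSpace X]
    (A : X →L[𝕜] X) (hhyp : ∃ f : X, DenseRange (fun n : ℕ => (A ^ n) f)) :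
    ∀ (l : 𝕜) (g : X), ContinuousLinearMap.adjoint A g = l • g → g = 0 := by
  intro l g hg
  by_contra hg0
  obtain ⟨f, hf⟩ := hhyp
  have hφ : innerSL 𝕜 g ≠ 0 := by
    rwa [← norm_ne_zero_iff, innerSL_apply_norm, norm_ne_zero_iff]
  have hcomp : (innerSL 𝕜 g).comp A = starRingEnd 𝕜 l • innerSL 𝕜 g := by
    ext x
    rw [ContinuousLinearMap.comp_apply, innerSL_apply_apply,
      ← ContinuousLinearMap.adjoint_inner_left, hg, inner_smul_left, smul_apply, innerSL_apply_apply, smul_eq_mul]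
  exact ContinuousLinearMap.not_denseRange_orbit_of_comp_eq_smul hφ hcomp f hf

/-- If a bounded linear operator `A` on a nonzero Hilbert space over `ℝ` or `ℂ` is hypercyclic,
then its adjoint `A*` has no eigenvalues. -/
theorem adjoint_no_eigenvalues_of_hypercyclic {𝕜 : Type*} [RCLike 𝕜] {X : Type*}
    [NormedAddCommGroup X] [InnerProductSpace 𝕜 X] [CompleteSpace X] [Nontrivial X]
    (A : X →L[𝕜] X) (hhyp : ∃ f : X, DenseRange (fun n : ℕ => (A ^ n) f)) :
    ∀ (l : 𝕜) (g : X), ContinuousLinearMap.adjoint A g = l • g → g = 0 :=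
  adjoint_no_eigenvalues_of_hypercyclic_general A hhyp
end

section
/- Let 𝕜 be ℝ or ℂ, let X be a nonzero Hilbert space over 𝕜, and let A be a bounded linear operator on X that is hypercyclic. Then for every λ ∈ 𝕜, the range of the operator A − λI is dense in X. -/
/-!
If the range of `A - λ` is not dense, Hahn–Banach gives a nonzero functional `φ` vanishing on it,
i.e. `φ ∘ A = λ φ`. Then `φ` sends the orbit `Aⁿ f` to the geometric sequence `λⁿ φ(f)`, and a
nonzero functional is surjective, so it would carry a dense orbit to a dense subset of `𝕜`.
But a geometric sequence is not dense: it stays in the ball of radius `‖φ f‖` when `‖λ‖ ≤ 1`,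
and outside it otherwise.
-/

theorem Dense.not_subset_of_isClosed_of_notMem {X : Type*} [TopologicalSpace X] {s t : Set X}
    (hs : Dense s) (ht : IsClosed t) {x : X} (hx : x ∉ t) : ¬ s ⊆ t := fun hst =>
  hx (ht.closure_subset_iff.mpr hst (hs x))

theorem not_denseRange_pow_mul {𝕜 : Type*} [NontriviallyNormedField 𝕜] (l c : 𝕜) :
    ¬ DenseRange fun n : ℕ => l ^ n * c := by
  intro hd
  have norm_eq (n : ℕ) : ‖l ^ n * c‖ = ‖l‖ ^ n * ‖c‖ := by rw [norm_mul, norm_pow]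
  by_cases hsmall : ‖l‖ ≤ 1 ∨ c = 0
  · obtain ⟨z, hz⟩ := NormedField.exists_lt_norm 𝕜 ‖c‖
    refine hd.not_subset_of_isClosed_of_notMem (Metric.isClosed_closedBall (x := 0))
      (x := z) (by simpa using hz) ?_
    rintro _ ⟨n, rfl⟩
    rw [mem_closedBall_zero_iff, norm_eq]
    rcases hsmall with hl | rfl
    · exact mul_le_of_le_one_left (norm_nonneg c) (pow_le_one₀ (norm_nonneg l) hl)
    · simp
  · push Not at hsmall
    obtain ⟨hl, hc⟩ := hsmall
    refine hd.not_subset_of_isClosed_of_notMem (t := {z | ‖c‖ ≤ ‖z‖})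
      (isClosed_le continuous_const continuous_norm) (x := 0) (by simpa using hc) ?_
    rintro _ ⟨n, rfl⟩
    show ‖c‖ ≤ ‖l ^ n * c‖
    rw [norm_eq]
    exact le_mul_of_one_le_left (norm_nonneg c) (one_le_pow₀ hl.le)

theorem Submodule.exists_dual_ne_zero_of_not_dense {𝕜 E : Type*} [RCLike 𝕜]
    [NormedAddCommGroup E] [NormedSpace 𝕜 E] {p : Submodule 𝕜 E} (hp : ¬ Dense (p : Set E)) :
    ∃ φ : StrongDual 𝕜 E, φ ≠ 0 ∧ ∀ x ∈ p, φ x = 0 := by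
  obtain ⟨x, hx⟩ := not_forall.mp hp
  let q := p.topologicalClosure
  have : IsClosed (q : Set E) := p.isClosed_topologicalClosure
  have hx0 : q.mkQL x ≠ 0 := by
    rwa [ne_eq, mkQL_apply, mkQ_apply, Quotient.mk_eq_zero, ← SetLike.mem_coe,
      topologicalClosure_coe]
  obtain ⟨g, hg⟩ := SeparatingDual.exists_ne_zero (R := 𝕜) hx0
  refine ⟨g.comp q.mkQL, fun h => hg ?_, fun y hy => ?_⟩
  · rw [← ContinuousLinearMap.comp_apply, h, zero_apply]
  · have : q.mkQL y = 0 := by simpa using p.le_topologicalClosure hy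
    rw [ContinuousLinearMap.comp_apply, this, map_zero]

namespace ContinuousLinearMap

theorem apply_pow_apply_eq_pow_mul {R M : Type*} [Semiring R] [TopologicalSpace R]
    [TopologicalSpace M] [AddCommMonoid M] [Module R M] {A : M →L[R] M} {φ : M →L[R] R} {l : R}
    (h : ∀ x, φ (A x) = l * φ x) (n : ℕ) (x : M) : φ ((A ^ n) x) = l ^ n * φ x := by
  induction n generalizing x with
  | zero => simp
  | succ n ih => rw [pow_succ, mul_apply_eq_comp, ih, h, pow_succ, mul_assoc]

theorem not_denseRange_pow_apply_of_map_apply_eq_mul {𝕜 X : Type*} [NontriviallyNormedField 𝕜]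
    [TopologicalSpace X] [AddCommGroup X] [Module 𝕜 X] {A : X →L[𝕜] X} {φ : StrongDual 𝕜 X}
    (hφ : φ ≠ 0) {l : 𝕜} (h : ∀ x, φ (A x) = l * φ x) (f : X) :
    ¬ DenseRange fun n : ℕ => (A ^ n) f := by
  intro hd
  have hsurj : Function.Surjective φ :=
    LinearMap.surjective_of_ne_zero (f := (φ : X →ₗ[𝕜] 𝕜)) (by exact_mod_cast hφ)
  have hdense := hsurj.denseRange.comp hd φ.continuous
  simp only [Function.comp_def, apply_pow_apply_eq_pow_mul h] at hdense
  exact not_denseRange_pow_mul l (φ f) hdense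

end ContinuousLinearMap

theorem range_sub_smul_dense_of_hypercyclic_general {𝕜 : Type*} [RCLike 𝕜] {X : Type*}
    [NormedAddCommGroup X] [InnerProductSpace 𝕜 X]
    (A : X →L[𝕜] X) (hhyp : ∃ f : X, DenseRange (fun n : ℕ => (A ^ n) f)) :
    ∀ l : 𝕜, Dense (Set.range fun x : X => A x - l • x) := by
  intro l
  obtain ⟨f, hf⟩ := hhyp
  by_contra hd
  let T : X →L[𝕜] X := A - l • ContinuousLinearMap.id 𝕜 X
  obtain ⟨φ, hφ, hφT⟩ :=
    Submodule.exists_dual_ne_zero_of_not_dense (p := LinearMap.range (T : X →ₗ[𝕜] X)) hd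
  have hφA (x : X) : φ (A x) = l * φ x := by
    simpa [T, sub_eq_zero] using hφT (T x) (LinearMap.mem_range_self _ x)
  exact ContinuousLinearMap.not_denseRange_pow_apply_of_map_apply_eq_mul hφ hφA f hf

/-- If a bounded linear operator `A` on a nonzero Hilbert space over `ℝ` or `ℂ` is hypercyclic,
then for every scalar `λ` the range of `A - λI` is dense. -/
theorem range_sub_smul_dense_of_hypercyclic {𝕜 : Type*} [RCLike 𝕜] {X : Type*}
    [NormedAddCommGroup X] [InnerProductSpace 𝕜 X] [CompleteSpace X] [Nontrivial X]
    (A : X →L[𝕜] X) (hhyp : ∃ f : X, DenseRange (fun n : ℕ => (A ^ n) f)) :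
    ∀ l : 𝕜, Dense (Set.range fun x : X => A x - l • x) :=
  range_sub_smul_dense_of_hypercyclic_general A hhyp
end

section
/- Let X be a nonzero complex Hilbert space and let A be a bounded self-adjoint operator on X (A = A*). Then A is not hypercyclic and, moreover, the collection {e^{tA}}_{t≥0} is not hypercyclic: no vector f ∈ X has {Aⁿf : n ∈ ℕ} dense in X, and no vector f ∈ X has {e^{tA}f : t ≥ 0} dense in X. -/
/-!
Every vector of an orbit `{B f}` with `B` self-adjoint satisfies `⟪B f, f⟫ ∈ ℝ`. If such an orbit
were dense, continuity would make `⟪y, f⟫` real for every `y`, and `y = I • f` gives `‖f‖ = 0`;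
but the orbit of `0` is `{0}`, which is not dense in a nontrivial space. Both `Aⁿ` and `exp (t A)`
are self-adjoint when `A` is.
-/

open scoped InnerProductSpace

theorem not_dense_of_subset_singleton {Y : Type*} [TopologicalSpace Y] [T1Space Y]
    [Nontrivial Y] {S : Set Y} {x : Y} (hS : S ⊆ {x}) : ¬ Dense S := by
  intro hd
  obtain ⟨y, hy⟩ := exists_ne x
  have hy_mem : y ∈ closure ({x} : Set Y) := closure_mono hS (hd y)
  exact hy (by simpa using hy_mem)

section InnerProduct

variable {X : Type*} [NormedAddCommGroup X] [InnerProductSpace ℂ X]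

theorem eq_zero_of_dense_of_im_inner_eq_zero {S : Set X} (hd : Dense S) {f : X}
    (h : ∀ y ∈ S, (⟪y, f⟫_ℂ).im = 0) : f = 0 := by
  have him : (fun y : X => (⟪y, f⟫_ℂ).im) = fun _ => 0 :=
    Continuous.ext_on hd (by fun_prop) continuous_const h
  have hIf : (⟪Complex.I • f, f⟫_ℂ).im = -‖f‖ ^ 2 := by
    rw [inner_smul_left, inner_self_eq_norm_sq_to_K, Complex.conj_I]
    simp [← Complex.ofReal_pow]
  have hnorm : ‖f‖ ^ 2 = 0 := by linarith [congrFun him (Complex.I • f)]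
  exact norm_eq_zero.mp (pow_eq_zero_iff two_ne_zero |>.mp hnorm)

variable [CompleteSpace X]

theorem not_dense_of_subset_selfAdjoint_orbit [Nontrivial X] {S : Set X} (f : X)
    (hS : ∀ y ∈ S, ∃ B : X →L[ℂ] X, IsSelfAdjoint B ∧ y = B f) : ¬ Dense S := by
  intro hd
  have hf : f = 0 := by
    refine eq_zero_of_dense_of_im_inner_eq_zero hd fun y hy => ?_
    obtain ⟨B, hB, rfl⟩ := hS y hy
    exact hB.isSymmetric.im_inner_apply_self f
  refine not_dense_of_subset_singleton (x := (0 : X)) (fun y hy => ?_) hd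
  obtain ⟨B, -, rfl⟩ := hS y hy
  simp [hf]

end InnerProduct

/-- A bounded self-adjoint operator `A` on a nonzero complex Hilbert space is not hypercyclic,
and neither is the collection `{e^{tA}}_{t ≥ 0}` of its exponentials. -/
theorem selfAdjoint_bounded_not_hypercyclic {X : Type*} [NormedAddCommGroup X]
    [InnerProductSpace ℂ X] [CompleteSpace X] [Nontrivial X] (A : X →L[ℂ] X)
    (hsa : ContinuousLinearMap.adjoint A = A) :
    (¬ ∃ f : X, DenseRange (fun n : ℕ => (A ^ n) f)) ∧
      (¬ ∃ f : X, Dense {y : X | ∃ t : ℝ, 0 ≤ t ∧ y = NormedSpace.exp (t • A) f}) := by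
  have hA : IsSelfAdjoint A := ContinuousLinearMap.isSelfAdjoint_iff'.mpr hsa
  constructor
  · rintro ⟨f, hf⟩
    refine not_dense_of_subset_selfAdjoint_orbit f ?_ hf
    rintro _ ⟨n, rfl⟩
    exact ⟨A ^ n, hA.pow n, rfl⟩
  · rintro ⟨f, hf⟩
    refine not_dense_of_subset_selfAdjoint_orbit f ?_ hf
    rintro _ ⟨t, -, rfl⟩
    exact ⟨_, ((IsSelfAdjoint.all t).smul hA).exp, rfl⟩
end
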